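/- arXiv:1509.01404 — 4 statements merged into one kernel-verified Lean document; each statement's English description precedes it below -/
import Mathlib

section
/- Let F(H) = (1/4)‖A − HHᵀ‖_F² with A symmetric. The partial derivative of F with respect to the entry H_{ij} equals H_{ij}³ + a_{ij}·H_{ij} + b_{ij}, where a_{ij} = ‖H_{i,:}‖² + ‖H_{:,j}‖² − 2H_{ij}² − A_{ii} and b_{ij} = H_{i,:}(HᵀH)_{:,j} − H_{:,j}ᵀA_{:,i} − H_{ij}³ − H_{ij}·a_{ij}. -/
/-!
Each entry `(A - HHᵀ)_{kl}` moves with `H_{ij}` at rate `-(δ_{ki} H_{lj} + δ_{li} H_{kj})`, so the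
derivative of `(1/4)‖A - HHᵀ‖_F²` in `H_{ij}` is `-(1/2)((RH)_{ij} + (RᵀH)_{ij})` with `R = A - HHᵀ`.
For symmetric `A` the residual `R` is symmetric, which gives the gradient `((HHᵀ - A)H)_{ij}`;
the quantities `a` and `b` only regroup this entry as a cubic in `H_{ij}`.
-/

open BigOperators Finset

namespace Matrix

variable {ι κ : Type*}

def setEntry [DecidableEq ι] [DecidableEq κ] {α : Type*} (H : Matrix ι κ α) (i : ι) (j : κ)
    (t : α) : Matrix ι κ α :=
  fun k m => if k = i ∧ m = j then t else H k m

section SetEntry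

variable [DecidableEq ι] [DecidableEq κ]

@[simp]
theorem setEntry_self {α : Type*} (H : Matrix ι κ α) (i : ι) (j : κ) :
    H.setEntry i j (H i j) = H := by
  ext k m
  unfold setEntry
  split_ifs with h
  · rw [h.1, h.2]
  · rfl

theorem hasDerivAt_setEntry_apply (H : Matrix ι κ ℝ) (i : ι) (j : κ) (k : ι) (m : κ)
    (x : ℝ) :
    HasDerivAt (fun t => H.setEntry i j t k m) (if k = i ∧ m = j then 1 else 0) x := by
  unfold setEntry
  split_ifs
  · exact hasDerivAt_id x
  · exact hasDerivAt_const x _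

theorem hasDerivAt_mul_transpose_setEntry_apply [Fintype κ] (H : Matrix ι κ ℝ) (i : ι) (j : κ)
    (k l : ι) :
    HasDerivAt (fun t => (H.setEntry i j t * (H.setEntry i j t)ᵀ) k l)
      ((if k = i then H l j else 0) + (if l = i then H k j else 0)) (H i j) := by
  simp only [mul_apply, transpose_apply]
  refine (HasDerivAt.fun_sum fun m _ => (H.hasDerivAt_setEntry_apply i j k m _).fun_mul
    (H.hasDerivAt_setEntry_apply i j l m _)).congr_deriv ?_
  simp [sum_add_distrib, ite_and]

end SetEntry

theorem sum_sum_mul_ite_add_ite [Fintype ι] [DecidableEq ι] (R : Matrix ι ι ℝ) (H : Matrix ι κ ℝ)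
    (i : ι) (j : κ) :
    ∑ k, ∑ l, R k l * ((if k = i then H l j else 0) + (if l = i then H k j else 0)) =
      (R * H) i j + (Rᵀ * H) i j := by
  simp [mul_add, sum_add_distrib, mul_apply]

end Matrix

open Matrix

noncomputable def symNMFLoss {ι κ : Type*} [Fintype ι] [Fintype κ] (A : Matrix ι ι ℝ)
    (H : Matrix ι κ ℝ) : ℝ :=
  (1 / 4) * ∑ k, ∑ l, (A - H * Hᵀ) k l ^ 2

theorem hasDerivAt_symNMFLoss_setEntry {ι κ : Type*} [Fintype ι] [Fintype κ] [DecidableEq ι]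
    [DecidableEq κ] {A : Matrix ι ι ℝ} (hA : Aᵀ = A) (H : Matrix ι κ ℝ) (i : ι) (j : κ) :
    HasDerivAt (fun t => symNMFLoss A (H.setEntry i j t)) ((H * Hᵀ * H - A * H) i j) (H i j) := by
  set R := A - H * Hᵀ with hR_def
  have hR : Rᵀ = R := by rw [hR_def, transpose_sub, transpose_mul, transpose_transpose, hA]
  have hterm : ∀ k l, HasDerivAt (fun t => (A - H.setEntry i j t * (H.setEntry i j t)ᵀ) k l ^ 2)
      (2 * R k l * -((if k = i then H l j else 0) + (if l = i then H k j else 0))) (H i j) := by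
    intro k l
    simpa [R] using ((hasDerivAt_const _ (A k l)).fun_sub
      (H.hasDerivAt_mul_transpose_setEntry_apply i j k l)).fun_pow 2
  refine ((HasDerivAt.fun_sum fun k _ => HasDerivAt.fun_sum fun l _ => hterm k l).const_mul
    (1 / 4 : ℝ)).congr_deriv ?_
  calc (1 / 4 : ℝ) * ∑ k, ∑ l,
        2 * R k l * -((if k = i then H l j else 0) + (if l = i then H k j else 0))
      = -(1 / 2) * ∑ k, ∑ l,
          R k l * ((if k = i then H l j else 0) + (if l = i then H k j else 0)) := by
        simp only [mul_sum]
        congr! 2 with k _ l _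
        ring
    _ = -(1 / 2) * ((R * H) i j + (Rᵀ * H) i j) := by rw [sum_sum_mul_ite_add_ite]
    _ = -(R * H) i j := by rw [hR]; ring
    _ = (H * Hᵀ * H - A * H) i j := by
        rw [hR_def, Matrix.sub_mul, Matrix.sub_apply, Matrix.sub_apply]
        ring

theorem stmt2_general {n r : ℕ} (A : Matrix (Fin n) (Fin n) ℝ) (hA : A.transpose = A)
    (H : Matrix (Fin n) (Fin r) ℝ) (i : Fin n) (j : Fin r)
    (a b : ℝ)
    (hb : b = (∑ m, H i m * (∑ k, H k m * H k j)) - (∑ k, H k j * A k i)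
              - (H i j) ^ 3 - H i j * a) :
    HasDerivAt
      (fun t : ℝ =>
        (1 / 4 : ℝ) *
          ∑ k, ∑ l,
            (A k l -
              ∑ m, (if k = i ∧ m = j then t else H k m) *
                   (if l = i ∧ m = j then t else H l m)) ^ 2)
      ((H i j) ^ 3 + a * H i j + b) (H i j) := by
  have hgrad : (H i j) ^ 3 + a * H i j + b = (H * Hᵀ * H - A * H) i j := by
    conv_rhs => rw [← hA, Matrix.mul_assoc]
    simp only [hb, Matrix.sub_apply, mul_apply, transpose_apply, mul_comm (H _ j)]
    ring
  rw [hgrad]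
  exact hasDerivAt_symNMFLoss_setEntry hA H i j

/-- Partial derivative of F(H) = (1/4)‖A − HHᵀ‖_F² with respect to H_{ij}. -/
theorem stmt2 {n r : ℕ} (A : Matrix (Fin n) (Fin n) ℝ) (hA : A.transpose = A)
    (H : Matrix (Fin n) (Fin r) ℝ) (i : Fin n) (j : Fin r)
    (a b : ℝ)
    (ha : a = (∑ m, (H i m) ^ 2) + (∑ k, (H k j) ^ 2) - 2 * (H i j) ^ 2 - A i i)
    (hb : b = (∑ m, H i m * (∑ k, H k m * H k j)) - (∑ k, H k j * A k i)
              - (H i j) ^ 3 - H i j * a) :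
    HasDerivAt
      (fun t : ℝ =>
        (1 / 4 : ℝ) *
          ∑ k, ∑ l,
            (A k l -
              ∑ m, (if k = i ∧ m = j then t else H k m) *
                   (if l = i ∧ m = j then t else H l m)) ^ 2)
      ((H i j) ^ 3 + a * H i j + b) (H i j) :=
  stmt2_general A hA H i j a b hb
end

section
/- If A ∈ ℝ^{n×n} is symmetric and H₀ ∈ ℝ^{n×r} is scaled so that ‖A − H₀H₀ᵀ‖_F ≤ ‖A‖_F, then any matrix H ∈ ℝ^{n×r} with H ≥ 0 satisfying ‖A − HHᵀ‖_F ≤ ‖A − H₀H₀ᵀ‖_F has ‖H_{:,k}‖₂ ≤ √(2‖A‖_F) for every column k. -/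
/-! By the triangle inequality, ‖HHᵀ‖_F ≤ ‖A‖_F + ‖A − HHᵀ‖_F ≤ 2‖A‖_F. When H ≥ 0, the
rank-one matrix H_{:,k}H_{:,k}ᵀ is entrywise dominated by HHᵀ = Σ_j H_{:,j}H_{:,j}ᵀ, and its
Frobenius norm is ‖H_{:,k}‖₂², so ‖H_{:,k}‖₂² ≤ 2‖A‖_F. -/

open BigOperators Finset Matrix

noncomputable def frob4 {n m : ℕ} (X : Matrix (Fin n) (Fin m) ℝ) : ℝ :=
  Real.sqrt (∑ i, ∑ j, (X i j) ^ 2)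

section Frobenius

attribute [local instance] Matrix.frobeniusNormedAddCommGroup

theorem frob4_eq_norm {n m : ℕ} (X : Matrix (Fin n) (Fin m) ℝ) : frob4 X = ‖X‖ := by
  simp only [frob4, frobenius_norm_def, Real.sqrt_eq_rpow, Real.norm_eq_abs, Real.rpow_two, sq_abs]

theorem frob4_le_add_frob4_sub {n m : ℕ} (X Y : Matrix (Fin n) (Fin m) ℝ) :
    frob4 Y ≤ frob4 X + frob4 (X - Y) := by
  simpa only [frob4_eq_norm, sub_sub_cancel] using norm_sub_le X (X - Y)

end Frobenius

theorem frob4_le_of_abs_le {n m : ℕ} {X Y : Matrix (Fin n) (Fin m) ℝ}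
    (h : ∀ i j, |X i j| ≤ |Y i j|) : frob4 X ≤ frob4 Y :=
  Real.sqrt_le_sqrt <| sum_le_sum fun i _ => sum_le_sum fun j _ => sq_le_sq.mpr (h i j)

theorem frob4_vecMulVec_self {n : ℕ} (v : Fin n → ℝ) :
    frob4 (vecMulVec v v) = ∑ i, v i ^ 2 := by
  have hsq : ∑ i, ∑ j, (v i * v j) ^ 2 = (∑ i, v i ^ 2) ^ 2 := by
    simp only [sq, sum_mul_sum]
    ring_nf
  simp only [frob4, vecMulVec_apply, hsq]
  exact Real.sqrt_sq (sum_nonneg fun i _ => sq_nonneg _)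

theorem vecMulVec_col_le_mul_transpose {n r : ℕ} {H : Matrix (Fin n) (Fin r) ℝ}
    (hH : ∀ i j, 0 ≤ H i j) (k : Fin r) (i j : Fin n) :
    vecMulVec (fun i => H i k) (fun i => H i k) i j ≤ (H * Hᵀ) i j := by
  simp only [vecMulVec_apply, mul_apply, transpose_apply]
  exact single_le_sum (fun m _ => mul_nonneg (hH i m) (hH j m)) (mem_univ k)

theorem sum_sq_col_le_frob4_mul_transpose {n r : ℕ} {H : Matrix (Fin n) (Fin r) ℝ}
    (hH : ∀ i j, 0 ≤ H i j) (k : Fin r) : ∑ i, H i k ^ 2 ≤ frob4 (H * Hᵀ) := by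
  rw [← frob4_vecMulVec_self]
  refine frob4_le_of_abs_le fun i j => ?_
  have hle := vecMulVec_col_le_mul_transpose hH k i j
  have hnonneg : 0 ≤ vecMulVec (fun i => H i k) (fun i => H i k) i j :=
    mul_nonneg (hH i k) (hH j k)
  exact abs_le_abs hle (by linarith)

theorem stmt4_general {n r : ℕ} (A : Matrix (Fin n) (Fin n) ℝ)
    (H₀ H : Matrix (Fin n) (Fin r) ℝ)
    (hscale : frob4 (A - H₀ * H₀.transpose) ≤ frob4 A)
    (hHnn : ∀ i j, 0 ≤ H i j)
    (hH : frob4 (A - H * H.transpose) ≤ frob4 (A - H₀ * H₀.transpose)) :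
    ∀ k : Fin r, Real.sqrt (∑ i, (H i k) ^ 2) ≤ Real.sqrt (2 * frob4 A) := by
  intro k
  have hgram : frob4 (H * Hᵀ) ≤ 2 * frob4 A := by
    linarith [frob4_le_add_frob4_sub A (H * Hᵀ)]
  exact Real.sqrt_le_sqrt ((sum_sq_col_le_frob4_mul_transpose hHnn k).trans hgram)

/-- If ‖A − H₀H₀ᵀ‖_F ≤ ‖A‖_F, then any nonnegative H with
    ‖A − HHᵀ‖_F ≤ ‖A − H₀H₀ᵀ‖_F has ‖H_{:,k}‖₂ ≤ √(2‖A‖_F) for every column k. -/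
theorem stmt4 {n r : ℕ} (A : Matrix (Fin n) (Fin n) ℝ) (hA : A.transpose = A)
    (H₀ H : Matrix (Fin n) (Fin r) ℝ)
    (hscale : frob4 (A - H₀ * H₀.transpose) ≤ frob4 A)
    (hHnn : ∀ i j, 0 ≤ H i j)
    (hH : frob4 (A - H * H.transpose) ≤ frob4 (A - H₀ * H₀.transpose)) :
    ∀ k : Fin r, Real.sqrt (∑ i, (H i k) ^ 2) ≤ Real.sqrt (2 * frob4 A) :=
  stmt4_general A H₀ H hscale hHnn hH
end

section
/- Let F : ℝ^{n×r} → ℝ be continuously differentiable and let (H_{(k)}) be a sequence in the nonnegative orthant with F(H_{(k+1)}) ≤ F(H_{(k)}) for all k, such that the sequence converges to a limit H̄, and such that for each coordinate (i,j) there is a subsequence of indices at which the update exactly minimizes F over the single coordinate H_{ij} with all others fixed. If moreover at the limit there exists a coordinate (i,j) and p ≠ 0 with H̄ + p·E^{ij} ≥ 0 and F(H̄ + p·E^{ij}) < F(H̄), one derives a contradiction; hence H̄ is a stationary point of min_{H≥0} F(H). -/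
open Filter Topology

/-!
Let `e` be the `(i, j)` unit matrix. Along the subsequence on which coordinate `(i, j)` is updated
exactly, every feasible point `H_(k) + (v - H_(k) i j) • e` has value at least `F H_(k+1)`, which
is at least `F H̄` since the values decrease to `F H̄`. Letting `k → ∞` gives
`F H̄ ≤ F (H̄ + p • e)` for every `p` with `H̄ i j + p ≥ 0`, so `H̄` is a one-sided minimizer of `F`
along `e`, and a two-sided one when `H̄ i j > 0`; Fermat's rule on the tangent cone then yields the
sign conditions on `∂F/∂H_ij`.
-/

section FermatAlongRay

variable {E : Type*} [NormedAddCommGroup E] [NormedSpace ℝ E] {F : E → ℝ} {x v : E}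

theorem fderiv_apply_nonneg_of_frequently_le (hF : DifferentiableAt ℝ F x)
    (h : ∃ᶠ t in 𝓝[>] (0 : ℝ), F x ≤ F (x + t • v)) : 0 ≤ fderiv ℝ F x v := by
  have hmin : IsMinOn F {y | F x ≤ F y} x := isMinOn_iff.2 fun _ hy => hy
  exact hmin.localize.hasFDerivWithinAt_nonneg hF.hasFDerivAt.hasFDerivWithinAt
    (mem_posTangentConeAt_of_frequently_mem h)

theorem fderiv_apply_eq_zero_of_frequently_le (hF : DifferentiableAt ℝ F x)
    (hpos : ∃ᶠ t in 𝓝[>] (0 : ℝ), F x ≤ F (x + t • v))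
    (hneg : ∃ᶠ t in 𝓝[>] (0 : ℝ), F x ≤ F (x + t • -v)) : fderiv ℝ F x v = 0 := by
  have h := fderiv_apply_nonneg_of_frequently_le hF hneg
  rw [map_neg] at h
  exact le_antisymm (neg_nonneg.1 h) (fderiv_apply_nonneg_of_frequently_le hF hpos)

end FermatAlongRay

section CoordinateDescent

variable {ι κ : Type*} [DecidableEq ι] [DecidableEq κ]

def singleEntry (i : ι) (j : κ) (p : ℝ) : ι → κ → ℝ :=
  fun a b => if a = i ∧ b = j then p else 0

theorem smul_singleEntry (i : ι) (j : κ) (t p : ℝ) :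
    t • singleEntry i j p = singleEntry i j (t * p) := by
  ext a b
  by_cases h : a = i ∧ b = j <;> simp [singleEntry, h]

theorem singleEntry_neg (i : ι) (j : κ) (p : ℝ) : singleEntry i j (-p) = -singleEntry i j p := by
  rw [← neg_one_mul, ← smul_singleEntry, neg_one_smul]

theorem continuous_singleEntry (i : ι) (j : κ) : Continuous (singleEntry i j) := by
  have h : singleEntry i j = fun p : ℝ => p • singleEntry i j 1 := by
    ext p : 1
    rw [smul_singleEntry, mul_one]
  rw [h]
  fun_prop

theorem add_singleEntry_sub_apply (H : ι → κ → ℝ) (i : ι) (j : κ) (c : ℝ) (a : ι) (b : κ) :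
    (H + singleEntry i j (c - H i j)) a b = if a = i ∧ b = j then c else H a b := by
  by_cases h : a = i ∧ b = j
  · obtain ⟨rfl, rfl⟩ := h
    simp [singleEntry]
  · simp [singleEntry, h]

def IsExactCoordUpdate (F : (ι → κ → ℝ) → ℝ) (i : ι) (j : κ) (H H' : ι → κ → ℝ) : Prop :=
  ∀ p, 0 ≤ H + singleEntry i j p → F H' ≤ F (H + singleEntry i j p)

theorem le_add_singleEntry_of_tendsto {F : (ι → κ → ℝ) → ℝ} (hF : Continuous F)
    {Hs : ℕ → ι → κ → ℝ} {Hbar : ι → κ → ℝ} (hnonneg : ∀ k, 0 ≤ Hs k)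
    (hmono : Antitone (F ∘ Hs)) (hconv : Tendsto Hs atTop (𝓝 Hbar)) {i : ι} {j : κ}
    {φ : ℕ → ℕ} (hφ : Tendsto φ atTop atTop)
    (hupd : ∀ k, IsExactCoordUpdate F i j (Hs (φ k)) (Hs (φ k + 1)))
    {p : ℝ} (hp : 0 ≤ Hbar i j + p) : F Hbar ≤ F (Hbar + singleEntry i j p) := by
  -- `G H` is `H` with its `(i, j)` entry replaced by `Hbar i j + p`
  let G : (ι → κ → ℝ) → ι → κ → ℝ := fun H => H + singleEntry i j (Hbar i j + p - H i j)
  have hG : Continuous G := continuous_id.add <| (continuous_singleEntry i j).comp <|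
    continuous_const.sub <| (continuous_apply j).comp (continuous_apply i)
  have hG_lim : G Hbar = Hbar + singleEntry i j p := by simp only [G, add_sub_cancel_left]
  have hG_nonneg : ∀ H, 0 ≤ H → 0 ≤ G H := fun H hH a b => by
    simp only [G, Pi.zero_apply, add_singleEntry_sub_apply]
    split_ifs
    exacts [hp, hH a b]
  have hlim : Tendsto (fun k => F (G (Hs (φ k)))) atTop (𝓝 (F (Hbar + singleEntry i j p))) :=
    hG_lim ▸ ((hF.comp hG).tendsto Hbar).comp (hconv.comp hφ)
  refine ge_of_tendsto hlim (Eventually.of_forall fun k => ?_)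
  calc F Hbar ≤ F (Hs (φ k + 1)) := hmono.le_of_tendsto ((hF.tendsto Hbar).comp hconv) _
    _ ≤ F (G (Hs (φ k))) := hupd k _ (hG_nonneg _ (hnonneg _))

end CoordinateDescent

/-- Theorem 1: if a sequence of exact cyclic coordinate descent iterates
    (nonincreasing in F, each coordinate exactly minimized along a subsequence)
    stays in the nonnegative orthant and converges to H̄, then H̄ is a
    stationary point of min_{H ≥ 0} F(H). -/
theorem stmt12 {n r : ℕ} (F : (Fin n → Fin r → ℝ) → ℝ) (hF : ContDiff ℝ 1 F)
    (Hs : ℕ → (Fin n → Fin r → ℝ)) (Hbar : Fin n → Fin r → ℝ)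
    (hnonneg : ∀ k i j, 0 ≤ Hs k i j)
    (hmono : ∀ k, F (Hs (k + 1)) ≤ F (Hs k))
    (hconv : Tendsto Hs atTop (nhds Hbar))
    (hmin : ∀ i j, ∃ φ : ℕ → ℕ, StrictMono φ ∧ ∀ k (p : ℝ),
        (∀ a b, 0 ≤ Hs (φ k) a b + (if a = i ∧ b = j then p else 0)) →
        F (Hs (φ k + 1)) ≤
          F (fun a b => Hs (φ k) a b + (if a = i ∧ b = j then p else 0))) :
    ∀ i j,
      (Hbar i j = 0 →
        0 ≤ fderiv ℝ F Hbar (fun a b => if a = i ∧ b = j then (1 : ℝ) else 0)) ∧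
      (0 < Hbar i j →
        fderiv ℝ F Hbar (fun a b => if a = i ∧ b = j then (1 : ℝ) else 0) = 0) := by
  intro i j
  obtain ⟨φ, hφ, hupd⟩ := hmin i j
  have hle : ∀ p, 0 ≤ Hbar i j + p → F Hbar ≤ F (Hbar + singleEntry i j p) := fun p =>
    le_add_singleEntry_of_tendsto hF.continuous hnonneg (antitone_nat_of_succ_le hmono) hconv
      hφ.tendsto_atTop hupd
  have hray : ∀ c : ℝ, (∀ᶠ t in 𝓝[>] (0 : ℝ), 0 ≤ Hbar i j + t * c) →
      ∃ᶠ t in 𝓝[>] (0 : ℝ), F Hbar ≤ F (Hbar + t • singleEntry i j c) := fun c hc =>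
    (hc.mono fun t ht => smul_singleEntry i j t c ▸ hle _ ht).frequently
  have hdiff : DifferentiableAt ℝ F Hbar := hF.differentiable one_ne_zero Hbar
  have hup (h0 : 0 ≤ Hbar i j) :
      ∃ᶠ t in 𝓝[>] (0 : ℝ), F Hbar ≤ F (Hbar + t • singleEntry i j 1) :=
    hray 1 <| eventually_nhdsWithin_of_forall fun t ht => by linarith [ht.out]
  refine ⟨fun hzero => fderiv_apply_nonneg_of_frequently_le hdiff (hup hzero.ge), fun hpos => ?_⟩
  refine fderiv_apply_eq_zero_of_frequently_le (v := singleEntry i j 1) hdiff (hup hpos.le) ?_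
  rw [← singleEntry_neg]
  refine hray (-1) ?_
  filter_upwards [Ioo_mem_nhdsGT hpos] with t ht
  linarith [ht.2]
end

section
/- If H̄ ∈ ℝ^{n×r}, H̄ ≥ 0, is not a stationary point of min_{H≥0} F(H) for a continuously differentiable F, then there exist an index (i,j), a real p ≠ 0, and ε > 0 such that H̄ + p·E^{ij} ≥ 0 and F(H̄ + p·E^{ij}) ≤ F(H̄) − ε. -/
/-!
A violated stationarity condition at `(i, j)` means that `∂F/∂H_{ij}(H̄) < 0`, or that
`∂F/∂H_{ij}(H̄) > 0` while `H̄_{ij} > 0`. In either case one of `±E^{ij}` is a descent direction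
along which small steps stay nonnegative, and `ε` is the decrease achieved by such a step.
-/

open Filter Topology

def coordMatrix {m n : Type*} [DecidableEq m] [DecidableEq n] (i : m) (j : n) : m → n → ℝ :=
  fun a b => if a = i ∧ b = j then 1 else 0

lemma add_ite_eq_add_smul_coordMatrix {m n : Type*} [DecidableEq m] [DecidableEq n]
    (H : m → n → ℝ) (i : m) (j : n) (p : ℝ) :
    (fun a b => H a b + if a = i ∧ b = j then p else 0) = H + p • coordMatrix i j := by
  funext a b
  simp only [coordMatrix, Pi.add_apply, Pi.smul_apply, smul_eq_mul, mul_ite, mul_one, mul_zero]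

lemma nonneg_add_ite {m n : Type*} [DecidableEq m] [DecidableEq n] {H : m → n → ℝ}
    (hH : ∀ a b, 0 ≤ H a b) {i : m} {j : n} {p : ℝ} (hp : 0 ≤ H i j + p) (a : m) (b : n) :
    0 ≤ H a b + if a = i ∧ b = j then p else 0 := by
  split_ifs with hab
  · obtain ⟨rfl, rfl⟩ := hab
    exact hp
  · simpa using hH a b

lemma HasDerivAt.eventually_lt_of_neg {g : ℝ → ℝ} {g' x : ℝ} (hg : HasDerivAt g g' x)
    (hg' : g' < 0) : ∀ᶠ t in 𝓝[>] 0, g (x + t) < g x := by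
  filter_upwards [(tendsto_order.1 hg.tendsto_slope_zero_right).2 0 hg', self_mem_nhdsWithin]
    with t hslope (ht : 0 < t)
  rw [smul_eq_mul, inv_mul_lt_iff₀ ht, mul_zero, sub_neg] at hslope
  exact hslope

lemma DifferentiableAt.eventually_lt_add_smul {E : Type*} [NormedAddCommGroup E]
    [NormedSpace ℝ E] {F : E → ℝ} {x v : E} (hF : DifferentiableAt ℝ F x)
    (hv : fderiv ℝ F x v < 0) : ∀ᶠ t in 𝓝[>] (0 : ℝ), F (x + t • v) < F x := by
  have hline : HasDerivAt (fun t : ℝ => x + t • v) v 0 := by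
    simpa using ((hasDerivAt_id (0 : ℝ)).smul_const v).const_add x
  have hF0 : HasFDerivAt F (fderiv ℝ F x) (x + (0 : ℝ) • v) := by
    simpa using hF.hasFDerivAt
  simpa using (hF0.comp_hasDerivAt 0 hline).eventually_lt_of_neg hv

/-- `c` is the slack of the bound constraint on the moved coordinate; it must stay nonnegative. -/
lemma DifferentiableAt.exists_feasible_descent {E : Type*} [NormedAddCommGroup E]
    [NormedSpace ℝ E] {F : E → ℝ} {x v : E} {c : ℝ} (hF : DifferentiableAt ℝ F x) (hc : 0 ≤ c)
    (hv : fderiv ℝ F x v < 0 ∨ (0 < c ∧ 0 < fderiv ℝ F x v)) :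
    ∃ p ≠ 0, 0 ≤ c + p ∧ F (x + p • v) < F x := by
  rcases hv with hv | ⟨hc_pos, hv⟩
  · obtain ⟨t, hdesc, ht⟩ := (hF.eventually_lt_add_smul hv).and self_mem_nhdsWithin |>.exists
    exact ⟨t, ht.ne', by linarith, hdesc⟩
  · have hv' : fderiv ℝ F x (-v) < 0 := by rwa [map_neg, neg_lt_zero]
    obtain ⟨t, hdesc, ht⟩ :=
      (hF.eventually_lt_add_smul hv').and (Ioo_mem_nhdsGT hc_pos) |>.exists
    refine ⟨-t, neg_ne_zero.2 ht.1.ne', by linarith [ht.2], ?_⟩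
    rwa [neg_smul, ← smul_neg]

lemma lt_zero_or_pos_of_not_stationary {x g : ℝ} (hx : 0 ≤ x)
    (h : ¬ ((x = 0 → 0 ≤ g) ∧ (0 < x → g = 0))) : g < 0 ∨ (0 < x ∧ 0 < g) := by
  rcases hx.eq_or_lt with rfl | hx <;> grind

/-- If H̄ ≥ 0 is not a stationary point of min_{H≥0} F(H) for continuously
    differentiable F, then some single-coordinate feasible perturbation decreases
    F by a fixed ε > 0. -/
theorem stmt13 {n r : ℕ} (F : (Fin n → Fin r → ℝ) → ℝ) (hF : ContDiff ℝ 1 F)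
    (Hbar : Fin n → Fin r → ℝ) (hnn : ∀ i j, 0 ≤ Hbar i j)
    (hnotstat :
      ¬ (∀ i j,
        (Hbar i j = 0 →
          0 ≤ fderiv ℝ F Hbar (fun a b => if a = i ∧ b = j then (1 : ℝ) else 0)) ∧
        (0 < Hbar i j →
          fderiv ℝ F Hbar (fun a b => if a = i ∧ b = j then (1 : ℝ) else 0) = 0))) :
    ∃ (i : Fin n) (j : Fin r) (p ε : ℝ), p ≠ 0 ∧ 0 < ε ∧
      (∀ a b, 0 ≤ Hbar a b + (if a = i ∧ b = j then p else 0)) ∧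
      F (fun a b => Hbar a b + (if a = i ∧ b = j then p else 0)) ≤ F Hbar - ε := by
  obtain ⟨i, hi⟩ := not_forall.1 hnotstat
  obtain ⟨j, hij⟩ := not_forall.1 hi
  obtain ⟨p, hp, hfeas, hdesc⟩ := (hF.differentiable one_ne_zero Hbar).exists_feasible_descent
    (v := coordMatrix i j) (hnn i j) (lt_zero_or_pos_of_not_stationary (hnn i j) hij)
  refine ⟨i, j, p, F Hbar - F (Hbar + p • coordMatrix i j), hp, sub_pos.2 hdesc,
    nonneg_add_ite hnn hfeas, ?_⟩
  rw [add_ite_eq_add_smul_coordMatrix, sub_sub_cancel]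
end
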